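/- Jacobi's imaginary transformation holds: θ₁(z;τ) = -i (-iτ)^{-1/2} exp(-iπ z²/τ) θ₁(-z/τ; -1/τ), where the square root is the principal branch. -/

import Mathlib

/-!
Writing `(-1)^k = e^{πik}` and expanding `(k + 1/2)²`, `θ₁(z;τ) = -i e^{πiτ/4 + πiz} θ(z + τ/2 + 1/2, τ)` with
`θ(w, τ) = ∑ₙ e^{2πinw + πin²τ}`. Apply the modular transformation of `θ` under `τ ↦ -1/τ`; since
`(z + τ/2 + 1/2)/τ = 1 - (-z/τ + (-1/τ)/2 + 1/2)`, periodicity and evenness of `θ` in `w` turn the result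
back into `θ₁(-z/τ; -1/τ)`, and the exponential prefactors agree up to the constant `-i`.
-/

open Complex Real BigOperators

/-- The Jacobi theta function `θ₁(z;τ)`. -/
noncomputable def jacobiTheta₁ (z τ : ℂ) : ℂ :=
  -Complex.I * ∑' k : ℤ, (-1 : ℂ) ^ k *
    Complex.exp ((π : ℂ) * Complex.I * τ * ((k : ℂ) + 1 / 2) ^ 2) *
    Complex.exp (2 * (π : ℂ) * Complex.I * ((k : ℂ) + 1 / 2) * z)

/-- The derivative of `θ₁` with respect to `z`. -/
noncomputable def jacobiTheta₁' (z τ : ℂ) : ℂ :=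
  deriv (fun w => jacobiTheta₁ w τ) z

lemma jacobiTheta₁_eq_jacobiTheta₂ (z τ : ℂ) :
    jacobiTheta₁ z τ = -I * cexp (π * I * τ / 4 + π * I * z) * jacobiTheta₂ (z + τ / 2 + 1 / 2) τ := by
  rw [jacobiTheta₁, jacobiTheta₂]
  conv_rhs => rw [mul_assoc, ← tsum_mul_left]
  congr 1
  refine tsum_congr fun k => ?_
  rw [jacobiTheta₂_term, ← exp_pi_mul_I, ← Complex.exp_int_mul, ← Complex.exp_add, ← Complex.exp_add,
    ← Complex.exp_add]
  congr 1
  ring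

lemma jacobiTheta₂_half_period_shift_inv (z : ℂ) {τ : ℂ} (hτ : τ ≠ 0) :
    jacobiTheta₂ ((z + τ / 2 + 1 / 2) / τ) (-1 / τ) =
      jacobiTheta₂ (-z / τ + (-1 / τ) / 2 + 1 / 2) (-1 / τ) := by
  have hshift : -z / τ + (-1 / τ) / 2 + 1 / 2 = -((z + τ / 2 + 1 / 2) / τ) + 1 := by
    field_simp
    ring
  rw [hshift, jacobiTheta₂_add_left, jacobiTheta₂_neg_left]

lemma exp_half_period_factor_mul_exp_gaussian (z : ℂ) {τ : ℂ} (hτ : τ ≠ 0) :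
    cexp (π * I * τ / 4 + π * I * z) * cexp (-π * I * (z + τ / 2 + 1 / 2) ^ 2 / τ) =
      -I * cexp (-π * I * z ^ 2 / τ) * cexp (π * I * (-1 / τ) / 4 + π * I * (-z / τ)) := by
  rw [← exp_neg_pi_div_two_mul_I, ← Complex.exp_add, ← Complex.exp_add, ← Complex.exp_add]
  congr 1
  field_simp
  ring

/-- Jacobi's imaginary transformation for `θ₁`, with the principal branch of the square root. -/
theorem jacobiTheta₁_imaginary_transformation (z τ : ℂ) (hτ : 0 < τ.im) :
    jacobiTheta₁ z τ =
      -Complex.I * (-Complex.I * τ) ^ (-(1 / 2 : ℂ)) *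
        Complex.exp (-(π : ℂ) * Complex.I * z ^ 2 / τ) *
        jacobiTheta₁ (-z / τ) (-1 / τ) := by
  have hτ₀ : τ ≠ 0 := by
    rintro rfl
    simp at hτ
  rw [jacobiTheta₁_eq_jacobiTheta₂, jacobiTheta₂_functional_equation,
    jacobiTheta₂_half_period_shift_inv z hτ₀, jacobiTheta₁_eq_jacobiTheta₂, cpow_neg, ← one_div]
  linear_combination (-I / (-I * τ) ^ (1 / 2 : ℂ) *
    jacobiTheta₂ (-z / τ + (-1 / τ) / 2 + 1 / 2) (-1 / τ)) * exp_half_period_factor_mul_exp_gaussian z hτ₀
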